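/- arXiv:2601.17537 — 2 statements merged into one kernel-verified Lean document; each statement's English description precedes it below -/
import Mathlib

section
/- Every interval ipomset P has a unique presentation P = P' * ⟨V,U,U⟩, where ⟨V,U,U⟩ is a starter with U the target interface of P, and P' is an interval ipomset whose sparse step decomposition ends with a terminator or is a single identity. -/
open scoped Classical

namespace HDA

/-! ### Ipomsets over a fixed alphabet -/

structure PreIpomset (σ : Type) : Type 1 where
  carrier : Type
  fin : Finite carrier
  lt : carrier → carrier → Prop
  evord : carrier → carrier → Prop
  S : Set carrier
  T : Set carrier
  lab : carrier → σ

namespace PreIpomset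

variable {σ : Type}

/-- The precedence order is empty. -/
def Discrete (P : PreIpomset σ) : Prop := ∀ x y, ¬ P.lt x y

/-- Validity: `lt` is a strict partial order which is an interval order, `evord` is acyclic,
for distinct events exactly one of the four relations holds, sources are minimal and
targets are maximal.  (All ipomsets considered are interval.) -/
structure IsIpomset (P : PreIpomset σ) : Prop where
  lt_trans : ∀ x y z, P.lt x y → P.lt y z → P.lt x z
  lt_irrefl : ∀ x, ¬ P.lt x x
  evord_acyclic : ∀ x, ¬ Relation.TransGen P.evord x x
  total : ∀ x y : P.carrier, x ≠ y → P.lt x y ∨ P.lt y x ∨ P.evord x y ∨ P.evord y x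
  lt_not_evord : ∀ x y, P.lt x y → ¬ P.evord x y ∧ ¬ P.evord y x
  src_min : ∀ x ∈ P.S, ∀ y, ¬ P.lt y x
  tgt_max : ∀ x ∈ P.T, ∀ y, ¬ P.lt x y
  interval : ∀ w x y z, P.lt w x → P.lt y z → P.lt w z ∨ P.lt y x

/-- A conclist: a discrete ipomset with empty interfaces. -/
def IsConclist (P : PreIpomset σ) : Prop :=
  P.IsIpomset ∧ P.Discrete ∧ P.S = ∅ ∧ P.T = ∅

/-- A starter `⟨U∖A,U,U⟩`. -/
def IsStarter (P : PreIpomset σ) : Prop := P.IsIpomset ∧ P.Discrete ∧ P.T = Set.univ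

/-- A terminator `⟨U,U,U∖B⟩`. -/
def IsTerminator (P : PreIpomset σ) : Prop := P.IsIpomset ∧ P.Discrete ∧ P.S = Set.univ

/-- An identity `⟨U,U,U⟩`. -/
def IsIdentityIpomset (P : PreIpomset σ) : Prop :=
  P.IsIpomset ∧ P.Discrete ∧ P.S = Set.univ ∧ P.T = Set.univ

def IsProperStarter (P : PreIpomset σ) : Prop := P.IsStarter ∧ P.S ≠ Set.univ

def IsProperTerminator (P : PreIpomset σ) : Prop := P.IsTerminator ∧ P.T ≠ Set.univ

/-- Isomorphism of (pre)ipomsets. -/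
def Iso (P Q : PreIpomset σ) : Prop :=
  ∃ f : P.carrier ≃ Q.carrier,
    (∀ x y, P.lt x y ↔ Q.lt (f x) (f y)) ∧
    (∀ x y, P.evord x y ↔ Q.evord (f x) (f y)) ∧
    (∀ x, x ∈ P.S ↔ f x ∈ Q.S) ∧
    (∀ x, x ∈ P.T ↔ f x ∈ Q.T) ∧
    (∀ x, Q.lab (f x) = P.lab x)

/-- Restriction to a subset of events, with empty interfaces. -/
def restrict (P : PreIpomset σ) (K : Set P.carrier) : PreIpomset σ where
  carrier := {x : P.carrier // x ∈ K}
  fin := by haveI := P.fin; exact inferInstance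
  lt := fun x y => P.lt x.val y.val
  evord := fun x y => P.evord x.val y.val
  S := ∅
  T := ∅
  lab := fun x => P.lab x.val

/-- The source interface of `P` as a conclist. -/
def srcIface (P : PreIpomset σ) : PreIpomset σ := P.restrict P.S

/-- The target interface of `P` as a conclist. -/
def tgtIface (P : PreIpomset σ) : PreIpomset σ := P.restrict P.T

/-- The underlying conclist (forget interfaces). -/
def conclistOf (P : PreIpomset σ) : PreIpomset σ := { P with S := ∅, T := ∅ }

/-- The identity ipomset `⟨U,U,U⟩` on the conclist underlying `P`. -/
def idOf (P : PreIpomset σ) : PreIpomset σ := { P with S := Set.univ, T := Set.univ }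

/-- The discrete ipomset `⟨S,U,T⟩` on the conclist underlying `P`. -/
def withIfaces (P : PreIpomset σ) (S T : Set P.carrier) : PreIpomset σ :=
  { P with S := S, T := T }

/-- The starter `⟨U∖A,U,U⟩` on the conclist underlying `P`. -/
def starter (P : PreIpomset σ) (A : Set P.carrier) : PreIpomset σ :=
  { P with S := Aᶜ, T := Set.univ }

/-- The terminator `⟨U,U,U∖B⟩` on the conclist underlying `P`. -/
def terminator (P : PreIpomset σ) (B : Set P.carrier) : PreIpomset σ :=
  { P with S := Set.univ, T := Bᶜ }

/-- A matching `T_P ≅ S_Q`, i.e. an isomorphism of interface conclists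
along which `P` and `Q` may be glued. -/
structure Matching (P Q : PreIpomset σ) : Type where
  g : {x : P.carrier // x ∈ P.T} ≃ {y : Q.carrier // y ∈ Q.S}
  evord_iff : ∀ x y, P.evord x.val y.val ↔ Q.evord (g x).val (g y).val
  lab_eq : ∀ x, Q.lab (g x).val = P.lab x.val

def gluePOf (P Q : PreIpomset σ) :
    P.carrier ⊕ {y : Q.carrier // y ∉ Q.S} → Option P.carrier
  | Sum.inl x => some x
  | Sum.inr _ => none

noncomputable def glueQOf (P Q : PreIpomset σ) (m : Matching P Q) :
    P.carrier ⊕ {y : Q.carrier // y ∉ Q.S} → Option Q.carrier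
  | Sum.inl x => if h : x ∈ P.T then some (m.g ⟨x, h⟩).val else none
  | Sum.inr y => some y.val

/-- The gluing `P * Q` along a matching `T_P ≅ S_Q`. -/
noncomputable def glue (P Q : PreIpomset σ) (m : Matching P Q) : PreIpomset σ where
  carrier := P.carrier ⊕ {y : Q.carrier // y ∉ Q.S}
  fin := by haveI := P.fin; haveI := Q.fin; exact inferInstance
  lt := fun u v =>
    (∃ x x', gluePOf P Q u = some x ∧ gluePOf P Q v = some x' ∧ P.lt x x') ∨
    (∃ y y', glueQOf P Q m u = some y ∧ glueQOf P Q m v = some y' ∧ Q.lt y y') ∨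
    ((∃ x, gluePOf P Q u = some x ∧ x ∉ P.T) ∧
     (∃ y, glueQOf P Q m v = some y ∧ y ∉ Q.S))
  evord := fun u v =>
    (∃ x x', gluePOf P Q u = some x ∧ gluePOf P Q v = some x' ∧ P.evord x x') ∨
    (∃ y y', glueQOf P Q m u = some y ∧ glueQOf P Q m v = some y' ∧ Q.evord y y')
  S := {u | ∃ x, gluePOf P Q u = some x ∧ x ∈ P.S}
  T := {u | ∃ y, glueQOf P Q m u = some y ∧ y ∈ Q.T}
  lab := Sum.elim P.lab fun y => Q.lab y.val

/-- `R` is (isomorphic to) the gluing `P * Q`; in particular `T_P ≅ S_Q`. -/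
def GlueRel (P Q R : PreIpomset σ) : Prop :=
  ∃ m : Matching P Q, Iso (glue P Q m) R

/-- A choice of gluing (used when a matching is known to exist). -/
noncomputable def glueChoice (P Q : PreIpomset σ) : PreIpomset σ :=
  if h : Nonempty (Matching P Q) then glue P Q h.some else P

/-- `GluesTo l R`: `R` is the gluing of the nonempty list `l` of ipomsets. -/
inductive GluesTo : List (PreIpomset σ) → PreIpomset σ → Prop
  | single {P R : PreIpomset σ} : Iso P R → GluesTo [P] R
  | cons {P : PreIpomset σ} {l : List (PreIpomset σ)} {R' R : PreIpomset σ} :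
      GluesTo l R' → GlueRel P R' R → GluesTo (P :: l) R

/-- Proper starters and proper terminators alternate. -/
def Alternating (l : List (PreIpomset σ)) : Prop :=
  l.Chain' fun P Q => (IsProperStarter P ∧ IsProperTerminator Q) ∨
    (IsProperTerminator P ∧ IsProperStarter Q)

/-- `l` is a sparse step decomposition of `R`: either a single identity, or an
alternating sequence of proper starters and proper terminators gluing to `R`. -/
def IsSparseDecomp (l : List (PreIpomset σ)) (R : PreIpomset σ) : Prop :=
  GluesTo l R ∧
  ((∃ I, l = [I] ∧ IsIdentityIpomset I) ∨
   ((∀ P ∈ l, IsProperStarter P ∨ IsProperTerminator P) ∧ Alternating l))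

/-- `P ∈ iPoms^q`: the sparse step decomposition of `P` does not end with a
proper starter (i.e. it ends with a terminator or is a single identity). -/
def InQ (P : PreIpomset σ) : Prop :=
  ∃ l, IsSparseDecomp l P ∧ ∀ Q, l.getLast? = some Q → ¬ IsProperStarter Q

end PreIpomset

open PreIpomset

variable {σ : Type}

/-! ### Languages and rational operations -/

def glueLang (L M : Set (PreIpomset σ)) : Set (PreIpomset σ) :=
  {R | ∃ P ∈ L, ∃ Q ∈ M, GlueRel P Q R}

def powLang (L : Set (PreIpomset σ)) : ℕ → Set (PreIpomset σ)
  | 0 => L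
  | n + 1 => glueLang L (powLang L n)

/-- `L⁺ = ⋃_{n ≥ 1} Lⁿ`. -/
def plusLang (L : Set (PreIpomset σ)) : Set (PreIpomset σ) := ⋃ n, powLang L n

/-- Rational languages of (interval) ipomsets: generated from `∅` and singletons
(up to isomorphism) of starters and terminators by union, gluing composition and plus. -/
inductive Rational : Set (PreIpomset σ) → Prop
  | empty : Rational ∅
  | single {P : PreIpomset σ} : IsStarter P ∨ IsTerminator P → Rational {Q | Iso Q P}
  | union {L M : Set (PreIpomset σ)} : Rational L → Rational M → Rational (L ∪ M)
  | concat {L M : Set (PreIpomset σ)} : Rational L → Rational M → Rational (glueLang L M)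
  | plus {L : Set (PreIpomset σ)} : Rational L → Rational (plusLang L)

/-! ### P-automata -/

structure PAutomaton (σ : Type) : Type 1 where
  Q : Type
  E : Type
  src : E → Q
  tgt : E → Q
  lab : E → PreIpomset σ
  mu : Q → PreIpomset σ
  start : Set Q
  accept : Set Q

namespace PAutomaton

variable {σ : Type}

/-- The axioms of a P-automaton: finite sets of states and transitions, states
labelled by conclists, transitions by interval ipomsets, with
`μ(s(e)) ≅ S_{λ(e)}` and `μ(t(e)) ≅ T_{λ(e)}`. -/
def IsPA (A : PAutomaton σ) : Prop :=
  Finite A.Q ∧ Finite A.E ∧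
  (∀ q, (A.mu q).IsConclist) ∧ (∀ e, (A.lab e).IsIpomset) ∧
  (∀ e, Iso (A.lab e).srcIface (A.mu (A.src e))) ∧
  (∀ e, Iso (A.lab e).tgtIface (A.mu (A.tgt e)))

/-- ST-automaton: every label is a starter or a terminator. -/
def IsST (A : PAutomaton σ) : Prop := ∀ e, IsStarter (A.lab e) ∨ IsTerminator (A.lab e)

/-- gST-automaton: every label is discrete. -/
def IsGST (A : PAutomaton σ) : Prop := ∀ e, (A.lab e).Discrete

/-- No transition is labelled by an identity. -/
def NoSilent (A : PAutomaton σ) : Prop := ∀ e, ¬ IsIdentityIpomset (A.lab e)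

/-- A reduced gST-automaton: no silent transitions and conditions (a)–(f). -/
def Reduced (A : PAutomaton σ) : Prop :=
  NoSilent A ∧
  (∀ e, A.tgt e ∉ A.start) ∧
  (∀ e, A.src e ∉ A.accept) ∧
  (∀ e, (A.lab e).T = Set.univ → A.tgt e ∈ A.accept) ∧
  (∀ e, (A.lab e).S = Set.univ → A.src e ∈ A.start) ∧
  (∀ e e', A.src e ∈ A.start → A.src e' = A.src e → e' = e) ∧
  (∀ e e', A.tgt e ∈ A.accept → A.tgt e' = A.tgt e → e' = e)

/-- Paths in a P-automaton, from a state to a state. -/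
inductive Path (A : PAutomaton σ) : A.Q → A.Q → Type
  | nil (q : A.Q) : Path A q q
  | cons (e : A.E) {r : A.Q} (rest : Path A (A.tgt e) r) : Path A (A.src e) r

/-- The (interval) ipomset recognized by a path, up to isomorphism:
the gluing of the labels of its transitions (an identity for a constant path). -/
inductive Rec {A : PAutomaton σ} : ∀ {p r : A.Q}, Path A p r → PreIpomset σ → Prop
  | nil (q : A.Q) (R : PreIpomset σ) : Iso (A.mu q).idOf R → Rec (Path.nil q) R
  | cons (e : A.E) {r : A.Q} (rest : Path A (A.tgt e) r) {R' R : PreIpomset σ} :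
      Rec rest R' → GlueRel (A.lab e) R' R → Rec (Path.cons e rest) R

/-- The language of a P-automaton. -/
def lang (A : PAutomaton σ) : Set (PreIpomset σ) :=
  {R | ∃ p r, ∃ α : Path A p r, p ∈ A.start ∧ r ∈ A.accept ∧ Rec α R}

/-- Dimension of a transition. -/
noncomputable def dim (A : PAutomaton σ) (e : A.E) : ℕ := Nat.card (A.lab e).carrier

/-- Number of bad starter transitions of dimension `n`. -/
noncomputable def bst (A : PAutomaton σ) (n : ℕ) : ℕ :=
  Nat.card {e : A.E // IsProperStarter (A.lab e) ∧ A.tgt e ∉ A.accept ∧ A.dim e = n}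

/-- Number of bad terminator transitions of dimension `n`. -/
noncomputable def btt (A : PAutomaton σ) (n : ℕ) : ℕ :=
  Nat.card {e : A.E // IsProperTerminator (A.lab e) ∧ A.src e ∉ A.start ∧ A.dim e = n}

/-- The automaton `𝒜_c`: remove the starter transition `c`; for every transition `e`
out of `t(c)` add a transition `e*` from `s(c)` to `t(e)` labelled `λ(c) * λ(e)`. -/
noncomputable def Ac (A : PAutomaton σ) (c : A.E) : PAutomaton σ where
  Q := A.Q
  E := {e : A.E // e ≠ c} ⊕ {e : A.E // A.src e = A.tgt c}
  src := Sum.elim (fun e => A.src e.val) fun _ => A.src c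
  tgt := Sum.elim (fun e => A.tgt e.val) fun e => A.tgt e.val
  lab := Sum.elim (fun e => A.lab e.val) fun e => glueChoice (A.lab c) (A.lab e.val)
  mu := A.mu
  start := A.start
  accept := A.accept

/-- Disjoint union of two P-automata. -/
def sumAut (A B : PAutomaton σ) : PAutomaton σ where
  Q := A.Q ⊕ B.Q
  E := A.E ⊕ B.E
  src := Sum.elim (Sum.inl ∘ A.src) (Sum.inr ∘ B.src)
  tgt := Sum.elim (Sum.inl ∘ A.tgt) (Sum.inr ∘ B.tgt)
  lab := Sum.elim A.lab B.lab
  mu := Sum.elim A.mu B.mu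
  start := Sum.inl '' A.start ∪ Sum.inr '' B.start
  accept := Sum.inl '' A.accept ∪ Sum.inr '' B.accept

/-- Concatenation `𝒜 * ℬ`: disjoint union together with identity-labelled transitions
from accepting states of `𝒜` to initial states of `ℬ` with isomorphic state labels. -/
def concatAut (A B : PAutomaton σ) : PAutomaton σ where
  Q := A.Q ⊕ B.Q
  E := A.E ⊕ B.E ⊕
    {pq : A.Q × B.Q // pq.1 ∈ A.accept ∧ pq.2 ∈ B.start ∧ Iso (A.mu pq.1) (B.mu pq.2)}
  src := Sum.elim (Sum.inl ∘ A.src)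
    (Sum.elim (Sum.inr ∘ B.src) fun pq => Sum.inl pq.val.1)
  tgt := Sum.elim (Sum.inl ∘ A.tgt)
    (Sum.elim (Sum.inr ∘ B.tgt) fun pq => Sum.inr pq.val.2)
  lab := Sum.elim A.lab (Sum.elim B.lab fun pq => (A.mu pq.val.1).idOf)
  mu := Sum.elim A.mu B.mu
  start := Sum.inl '' A.start
  accept := Sum.inr '' B.accept

/-- Kleene plus `𝒜⁺`: add identity-labelled transitions from accepting states
to initial states with isomorphic state labels. -/
def plusAut (A : PAutomaton σ) : PAutomaton σ where
  Q := A.Q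
  E := A.E ⊕
    {pq : A.Q × A.Q // pq.1 ∈ A.accept ∧ pq.2 ∈ A.start ∧ Iso (A.mu pq.1) (A.mu pq.2)}
  src := Sum.elim A.src fun pq => pq.val.1
  tgt := Sum.elim A.tgt fun pq => pq.val.2
  lab := Sum.elim A.lab fun pq => (A.mu pq.val.1).idOf
  mu := A.mu
  start := A.start
  accept := A.accept

end PAutomaton

/-! ### Partial HDAs -/

/-- `g` exhibits `V` as the sub-conclist of `U` obtained by removing the events in `K`. -/
def IsFaceEmbed (U : PreIpomset σ) (K : Set U.carrier) (V : PreIpomset σ)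
    (g : V.carrier → U.carrier) : Prop :=
  Function.Injective g ∧ Set.range g = Kᶜ ∧
  (∀ u v, V.evord u v ↔ U.evord (g u) (g v)) ∧
  (∀ u, U.lab (g u) = V.lab u)

/-- The data of a partial higher-dimensional automaton: cells labelled by conclists,
partial face maps, initial and accepting cells. -/
structure PrePHDA (σ : Type) : Type 1 where
  cell : Type
  ev : cell → PreIpomset σ
  face : (x : cell) → Set (ev x).carrier → Set (ev x).carrier → Option cell
  start : Set cell
  accept : Set cell

namespace PrePHDA

variable {σ : Type}

/-- The lax precubical identity: whenever `δ_{A,B}(x)` and `δ_{C,D}(δ_{A,B}(x))` are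
defined, `δ_{A∪C,B∪D}(x)` is defined and equal to the composite. -/
def IsLax (X : PrePHDA σ) : Prop :=
  ∀ x (A B : Set (X.ev x).carrier) y, X.face x A B = some y →
    ∀ g, IsFaceEmbed (X.ev x) (A ∪ B) (X.ev y) g →
      ∀ (C D : Set (X.ev y).carrier) z, X.face y C D = some z →
        X.face x (A ∪ g '' C) (B ∪ g '' D) = some z

/-- The axioms of a partial HDA. -/
def IsPHDA (X : PrePHDA σ) : Prop :=
  (∀ x, (X.ev x).IsConclist) ∧
  (∀ x, X.face x ∅ ∅ = some x) ∧
  (∀ x A B y, X.face x A B = some y →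
    Disjoint A B ∧ ∃ g, IsFaceEmbed (X.ev x) (A ∪ B) (X.ev y) g) ∧
  IsLax X

/-- Strictness: `δ_{C,D} ∘ δ_{A,B} = δ_{A∪C,B∪D}` as partial functions. -/
def IsStrict (X : PrePHDA σ) : Prop :=
  IsPHDA X ∧
  (∀ x (A B : Set (X.ev x).carrier) y, X.face x A B = some y →
    ∀ g, IsFaceEmbed (X.ev x) (A ∪ B) (X.ev y) g →
      ∀ C D : Set (X.ev y).carrier,
        X.face x (A ∪ g '' C) (B ∪ g '' D) = X.face y C D) ∧
  (∀ x (A B C D : Set (X.ev x).carrier),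
    Disjoint (A ∪ C) (B ∪ D) → C ∪ D ⊆ (A ∪ B)ᶜ →
    X.face x A B = none → X.face x (A ∪ C) (B ∪ D) = none)

/-- Paths in a partial HDA: sequences of upsteps and downsteps. -/
inductive Path (X : PrePHDA σ) : X.cell → X.cell → Type
  | nil (x : X.cell) : Path X x x
  | up {x z : X.cell} (y : X.cell) (A : Set (X.ev y).carrier)
      (h : X.face y A ∅ = some x) (rest : Path X y z) : Path X x z
  | down {z w : X.cell} (y : X.cell) (B : Set (X.ev y).carrier)
      (h : X.face y ∅ B = some z) (rest : Path X z w) : Path X y w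

/-- Directions of the steps of a path (`true` = upstep). -/
def Path.dirs {X : PrePHDA σ} : {x z : X.cell} → Path X x z → List Bool
  | _, _, .nil _ => []
  | _, _, .up _ _ _ rest => true :: rest.dirs
  | _, _, .down _ _ _ rest => false :: rest.dirs

/-- A path is sparse if upsteps and downsteps alternate. -/
def Path.Sparse {X : PrePHDA σ} {x z : X.cell} (α : Path X x z) : Prop :=
  α.dirs.Chain' (· ≠ ·)

/-- Concatenation of paths. -/
def Path.comp {X : PrePHDA σ} : {x y z : X.cell} → Path X x y → Path X y z → Path X x z
  | _, _, _, .nil _, β => β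
  | _, _, _, .up y A h rest, β => .up y A h (rest.comp β)
  | _, _, _, .down y B h rest, β => .down y B h (rest.comp β)

/-- The ipomset recognized by a path, up to isomorphism: the gluing of the starters
and terminators of its steps (an identity for a constant path). -/
inductive Rec {X : PrePHDA σ} : ∀ {x z : X.cell}, Path X x z → PreIpomset σ → Prop
  | nil (x : X.cell) (R : PreIpomset σ) :
      Iso (X.ev x).idOf R → Rec (Path.nil x) R
  | up {x z : X.cell} (y : X.cell) (A : Set (X.ev y).carrier)
      (h : X.face y A ∅ = some x) (rest : Path X y z) {R' R : PreIpomset σ} :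
      Rec rest R' → GlueRel ((X.ev y).starter A) R' R → Rec (Path.up y A h rest) R
  | down {z w : X.cell} (y : X.cell) (B : Set (X.ev y).carrier)
      (h : X.face y ∅ B = some z) (rest : Path X z w) {R' R : PreIpomset σ} :
      Rec rest R' → GlueRel ((X.ev y).terminator B) R' R → Rec (Path.down y B h rest) R

/-- The language of a partial HDA. -/
def lang (X : PrePHDA σ) : Set (PreIpomset σ) :=
  {R | ∃ x z, ∃ α : Path X x z, x ∈ X.start ∧ z ∈ X.accept ∧ Rec α R}

/-- `X(K,P)`: cells reachable from `K` by a path recognizing `P`. -/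
def track (X : PrePHDA σ) (K : Set X.cell) (P : PreIpomset σ) : Set X.cell :=
  {x | ∃ s, ∃ α : Path X s x, s ∈ K ∧ Rec α P}

/-- Deterministic partial HDA: at most one initial cell per conclist, and lower
face maps are "injective" in the appropriate sense. -/
def Deterministic (X : PrePHDA σ) : Prop :=
  (∀ x y, x ∈ X.start → y ∈ X.start → Iso (X.ev x) (X.ev y) → x = y) ∧
  (∀ (y y' : X.cell) (A : Set (X.ev y).carrier) (A' : Set (X.ev y').carrier)
      (x : X.cell), X.face y A ∅ = some x → X.face y' A' ∅ = some x →
    (∃ f : (X.ev y).carrier ≃ (X.ev y').carrier,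
      (∀ u v, (X.ev y).evord u v ↔ (X.ev y').evord (f u) (f v)) ∧
      (∀ u, (X.ev y').lab (f u) = (X.ev y).lab u) ∧ f '' A = A') → y = y')

end PrePHDA

/-! ### Relational HDAs -/

/-- The data of a relational HDA: face relations instead of partial face maps. -/
structure PreRHDA (σ : Type) : Type 1 where
  cell : Type
  ev : cell → PreIpomset σ
  face : (x : cell) → Set (ev x).carrier → Set (ev x).carrier → Set cell
  start : Set cell
  accept : Set cell

namespace PreRHDA

variable {σ : Type}

/-- The axioms of a relational HDA, with the lax precubical identity
`δ_{C,D} ∘ δ_{A,B} ⊆ δ_{A∪C,B∪D}`. -/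
def IsRHDA (X : PreRHDA σ) : Prop :=
  (∀ x, (X.ev x).IsConclist) ∧
  (∀ x, X.face x ∅ ∅ = {x}) ∧
  (∀ x A B y, y ∈ X.face x A B →
    Disjoint A B ∧ ∃ g, IsFaceEmbed (X.ev x) (A ∪ B) (X.ev y) g) ∧
  (∀ x (A B : Set (X.ev x).carrier) y, y ∈ X.face x A B →
    ∀ g, IsFaceEmbed (X.ev x) (A ∪ B) (X.ev y) g →
      ∀ (C D : Set (X.ev y).carrier) z, z ∈ X.face y C D →
        z ∈ X.face x (A ∪ g '' C) (B ∪ g '' D))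

/-- Paths in a relational HDA. -/
inductive Path (X : PreRHDA σ) : X.cell → X.cell → Type 1
  | nil (x : X.cell) : Path X x x
  | up {x z : X.cell} (y : X.cell) (A : Set (X.ev y).carrier)
      (h : x ∈ X.face y A ∅) (rest : Path X y z) : Path X x z
  | down {z w : X.cell} (y : X.cell) (B : Set (X.ev y).carrier)
      (h : z ∈ X.face y ∅ B) (rest : Path X z w) : Path X y w

/-- The ipomset recognized by a path in a relational HDA. -/
inductive Rec {X : PreRHDA σ} : ∀ {x z : X.cell}, Path X x z → PreIpomset σ → Prop
  | nil (x : X.cell) (R : PreIpomset σ) :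
      Iso (X.ev x).idOf R → Rec (Path.nil x) R
  | up {x z : X.cell} (y : X.cell) (A : Set (X.ev y).carrier)
      (h : x ∈ X.face y A ∅) (rest : Path X y z) {R' R : PreIpomset σ} :
      Rec rest R' → GlueRel ((X.ev y).starter A) R' R → Rec (Path.up y A h rest) R
  | down {z w : X.cell} (y : X.cell) (B : Set (X.ev y).carrier)
      (h : z ∈ X.face y ∅ B) (rest : Path X z w) {R' R : PreIpomset σ} :
      Rec rest R' → GlueRel ((X.ev y).terminator B) R' R → Rec (Path.down y B h rest) R

/-- The language of a relational HDA. -/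
def lang (X : PreRHDA σ) : Set (PreIpomset σ) :=
  {R | ∃ x z, ∃ α : Path X x z, x ∈ X.start ∧ z ∈ X.accept ∧ Rec α R}

/-- The ST-automaton `ST(X)` of a relational HDA `X`: states are cells, transitions
mimic the starting and terminating of events. -/
def stAut (X : PreRHDA σ) : PAutomaton σ where
  Q := X.cell
  E := (Σ q : X.cell, Σ A : Set (X.ev q).carrier, {p : X.cell // p ∈ X.face q A ∅}) ⊕
       (Σ q : X.cell, Σ B : Set (X.ev q).carrier, {r : X.cell // r ∈ X.face q ∅ B})
  src := Sum.elim (fun t => t.2.2.val) fun t => t.1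
  tgt := Sum.elim (fun t => t.1) fun t => t.2.2.val
  lab := Sum.elim (fun t => (X.ev t.1).starter t.2.1) fun t => (X.ev t.1).terminator t.2.1
  mu := X.ev
  start := X.start
  accept := X.accept

end PreRHDA

/-! ### The partial HDA of a reduced gST-automaton -/

open PAutomaton

/-- The cell representing a state `q` in `X(𝒜)`: `q` is merged with a terminator
transition out of it or a starter transition into it, if such exists. -/
noncomputable def cellOfState (A : PAutomaton σ) (q : A.Q) : A.E ⊕ A.Q :=
  if h : ∃ e, IsTerminator (A.lab e) ∧ A.src e = q then Sum.inl h.choose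
  else if h' : ∃ e, IsStarter (A.lab e) ∧ A.tgt e = q then Sum.inl h'.choose
  else Sum.inr q

/-- `X(𝒜)`: cells are `(Q ⊔ E)/∼`, with the only defined (nontrivial) face maps
`δ⁰_{U∖S}([e]) = [s(e)]` and `δ¹_{U∖T}([e]) = [t(e)]` for `λ(e) = ⟨S,U,T⟩`. -/
noncomputable def XofA (A : PAutomaton σ) : PrePHDA σ where
  cell := A.E ⊕ A.Q
  ev := Sum.elim (fun e => (A.lab e).conclistOf) A.mu
  face := fun x =>
    match x with
    | Sum.inl e => fun As Bs =>
        if As = ∅ ∧ Bs = ∅ then some (Sum.inl e)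
        else if As = (A.lab e).Sᶜ ∧ Bs = ∅ then some (cellOfState A (A.src e))
        else if As = ∅ ∧ Bs = (A.lab e).Tᶜ then some (cellOfState A (A.tgt e))
        else none
    | Sum.inr q => fun As Bs =>
        if As = ∅ ∧ Bs = ∅ then some (Sum.inr q) else none
  start := cellOfState A '' A.start
  accept := cellOfState A '' A.accept

end HDA

/-!
The events that the final starter can start are the set `finalStartable P` of target events
that are not sources and lie above every non-target event. Cutting `P` along this set gives
the presentation. Conversely, every presentation `P = P' * ⟨V,U,U⟩` comes from a cut of `P`
whose right part is `T_P`; and `P' ∈ iPoms^q` forces `finalStartable P' = ∅`, which pins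
down the left part. That the left part of our cut lies in `iPoms^q` is shown by building
sparse step decompositions from the left, peeling off a first terminator or starter.
-/

namespace HDA

namespace PreIpomset

variable {σ : Type}

open Set Function

instance (P : PreIpomset σ) : Finite P.carrier := P.fin

theorem iso_refl (P : PreIpomset σ) : Iso P P :=
  ⟨Equiv.refl _, fun _ _ => Iff.rfl, fun _ _ => Iff.rfl, fun _ => Iff.rfl, fun _ => Iff.rfl,
    fun _ => rfl⟩

theorem Iso.S_eq_univ {P Q : PreIpomset σ} (h : Iso P Q) (hP : P.S = univ) : Q.S = univ := by
  obtain ⟨f, -, -, hS, -, -⟩ := h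
  exact eq_univ_of_forall fun x => by simpa [hP] using hS (f.symm x)

theorem Iso.T_eq_univ {P Q : PreIpomset σ} (h : Iso P Q) (hP : P.T = univ) : Q.T = univ := by
  obtain ⟨f, -, -, -, hT, -⟩ := h
  exact eq_univ_of_forall fun x => by simpa [hP] using hT (f.symm x)

/-! ### Induced sub-ipomsets -/

def induce (P : PreIpomset σ) (K S' T' : Set P.carrier) : PreIpomset σ where
  carrier := K
  fin := inferInstance
  lt x y := P.lt x y
  evord x y := P.evord x y
  S := {x | x.val ∈ S'}
  T := {x | x.val ∈ T'}
  lab x := P.lab x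

theorem induce_isIpomset {P : PreIpomset σ} (hP : P.IsIpomset) {K S' T' : Set P.carrier}
    (hS : ∀ x ∈ K ∩ S', ∀ y ∈ K, ¬ P.lt y x) (hT : ∀ x ∈ K ∩ T', ∀ y ∈ K, ¬ P.lt x y) :
    (P.induce K S' T').IsIpomset where
  lt_trans _ _ _ := hP.lt_trans _ _ _
  lt_irrefl _ := hP.lt_irrefl _
  evord_acyclic x hx := hP.evord_acyclic x.1 (hx.lift Subtype.val fun _ _ h => h)
  total x y hxy := hP.total x.1 y.1 (Subtype.coe_ne_coe.2 hxy)
  lt_not_evord _ _ := hP.lt_not_evord _ _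
  src_min x hx y := hS x.1 ⟨x.2, hx⟩ y.1 y.2
  tgt_max x hx y := hT x.1 ⟨x.2, hx⟩ y.1 y.2
  interval _ _ _ _ := hP.interval _ _ _ _

theorem induce_discrete {P : PreIpomset σ} {K S' T' : Set P.carrier}
    (hK : ∀ x ∈ K, ∀ y ∈ K, ¬ P.lt x y) : (P.induce K S' T').Discrete :=
  fun x y => hK x.1 x.2 y.1 y.2

theorem iso_induce_range {A P : PreIpomset σ} {e : A.carrier → P.carrier} (he : Injective e)
    {S' T' : Set P.carrier} (hlt : ∀ a b, A.lt a b ↔ P.lt (e a) (e b))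
    (hev : ∀ a b, A.evord a b ↔ P.evord (e a) (e b)) (hS : ∀ a, a ∈ A.S ↔ e a ∈ S')
    (hT : ∀ a, a ∈ A.T ↔ e a ∈ T') (hlab : ∀ a, P.lab (e a) = A.lab a) :
    Iso A (P.induce (range e) S' T') :=
  ⟨Equiv.ofInjective e he, hlt, hev, hS, hT, hlab⟩

/-! ### Gluings and cuts -/

section Glue

variable {A B : PreIpomset σ} (m : Matching A B)

def glueLeft (a : A.carrier) : (glue A B m).carrier := Sum.inl a

-- A source event of `B` is represented by the target event of `A` it is matched with.
noncomputable def glueRight (y : B.carrier) : (glue A B m).carrier :=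
  if hy : y ∈ B.S then glueLeft m (m.g.symm ⟨y, hy⟩).val
  else show (glue A B m).carrier from Sum.inr ⟨y, hy⟩

theorem glueLeft_injective : Injective (glueLeft m) := fun _ _ => Sum.inl.inj

theorem gluePOf_eq_some {u : (glue A B m).carrier} {a : A.carrier} :
    gluePOf A B u = some a ↔ u = glueLeft m a := by
  rcases u with x | z
  · exact ⟨fun h => by cases h; rfl, fun h => by cases h; rfl⟩
  · exact ⟨fun h => (by cases h), fun h => (by cases h)⟩

theorem glueQOf_glueLeft_eq_some {a : A.carrier} {y : B.carrier} :
    glueQOf A B m (glueLeft m a) = some y ↔ ∃ ha : a ∈ A.T, (m.g ⟨a, ha⟩).val = y := by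
  by_cases ha : a ∈ A.T <;> simp [glueLeft, glueQOf, ha]

theorem glueQOf_glueRight (y : B.carrier) : glueQOf A B m (glueRight m y) = some y := by
  by_cases hy : y ∈ B.S
  · rw [glueRight, dif_pos hy]
    exact (glueQOf_glueLeft_eq_some m).2 ⟨(m.g.symm ⟨y, hy⟩).2, by simp⟩
  · rw [glueRight, dif_neg hy]
    rfl

theorem eq_glueRight_of_glueQOf {u : (glue A B m).carrier} {y : B.carrier}
    (h : glueQOf A B m u = some y) : u = glueRight m y := by
  rcases u with a | z
  · obtain ⟨ha, rfl⟩ := (glueQOf_glueLeft_eq_some m).1 h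
    rw [glueRight, dif_pos (m.g ⟨a, ha⟩).2, Subtype.coe_eta, Equiv.symm_apply_apply]
    rfl
  · obtain rfl : z.val = y := Option.some.inj h
    rw [glueRight, dif_neg z.2]

theorem glueRight_injective : Injective (glueRight m) := fun y y' h =>
  Option.some.inj ((glueQOf_glueRight m y).symm.trans (h ▸ glueQOf_glueRight m y'))

theorem glueRight_eq_glueLeft {y : B.carrier} {a : A.carrier} (h : glueRight m y = glueLeft m a) :
    ∃ ha : a ∈ A.T, (m.g ⟨a, ha⟩).val = y :=
  (glueQOf_glueLeft_eq_some m).1 (h ▸ glueQOf_glueRight m y)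

theorem glueRight_mem_range_glueLeft {y : B.carrier} :
    glueRight m y ∈ range (glueLeft m) ↔ y ∈ B.S := by
  by_cases hy : y ∈ B.S
  · rw [glueRight, dif_pos hy]
    exact iff_of_true (mem_range_self _) hy
  · rw [glueRight, dif_neg hy]
    exact iff_of_false (fun ⟨a, h⟩ => by cases h) hy

theorem glueLeft_mem_range_glueRight {a : A.carrier} :
    glueLeft m a ∈ range (glueRight m) ↔ a ∈ A.T := by
  refine ⟨fun ⟨y, hy⟩ => (glueRight_eq_glueLeft m hy).1, fun ha => ⟨(m.g ⟨a, ha⟩).val, ?_⟩⟩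
  exact (eq_glueRight_of_glueQOf m ((glueQOf_glueLeft_eq_some m).2 ⟨ha, rfl⟩)).symm

theorem glue_lt_glueLeft (hB : B.IsIpomset) {a b : A.carrier} :
    (glue A B m).lt (glueLeft m a) (glueLeft m b) ↔ A.lt a b := by
  refine ⟨?_, fun h => Or.inl ⟨a, b, rfl, rfl, h⟩⟩
  rintro (⟨x, x', hx, hx', h⟩ | ⟨y, y', -, hy', h⟩ | ⟨-, y, hy, hyS⟩)
  · cases hx; cases hx'; exact h
  · obtain ⟨hb, rfl⟩ := (glueQOf_glueLeft_eq_some m).1 hy'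
    exact (hB.src_min _ (m.g _).2 _ h).elim
  · obtain ⟨hb, rfl⟩ := (glueQOf_glueLeft_eq_some m).1 hy
    exact (hyS (m.g _).2).elim

theorem glue_evord_glueLeft {a b : A.carrier} :
    (glue A B m).evord (glueLeft m a) (glueLeft m b) ↔ A.evord a b := by
  refine ⟨?_, fun h => Or.inl ⟨a, b, rfl, rfl, h⟩⟩
  rintro (⟨x, x', hx, hx', h⟩ | ⟨y, y', hy, hy', h⟩)
  · cases hx; cases hx'; exact h
  · obtain ⟨ha, rfl⟩ := (glueQOf_glueLeft_eq_some m).1 hy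
    obtain ⟨hb, rfl⟩ := (glueQOf_glueLeft_eq_some m).1 hy'
    exact (m.evord_iff _ _).2 h

theorem glueLeft_mem_glue_S {a : A.carrier} : glueLeft m a ∈ (glue A B m).S ↔ a ∈ A.S :=
  ⟨fun ⟨x, hx, h⟩ => by cases hx; exact h, fun h => ⟨a, rfl, h⟩⟩

theorem glue_lt_glueRight (hA : A.IsIpomset) {y y' : B.carrier} :
    (glue A B m).lt (glueRight m y) (glueRight m y') ↔ B.lt y y' := by
  refine ⟨?_, fun h => Or.inr (Or.inl ⟨y, y', glueQOf_glueRight m y, glueQOf_glueRight m y', h⟩)⟩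
  rintro (⟨x, x', hx, -, h⟩ | ⟨z, z', hz, hz', h⟩ | ⟨⟨x, hx, hxT⟩, -⟩)
  · obtain ⟨hxT, -⟩ := glueRight_eq_glueLeft m ((gluePOf_eq_some m).1 hx)
    exact (hA.tgt_max x hxT x' h).elim
  · rw [glueQOf_glueRight] at hz hz'
    cases hz; cases hz'; exact h
  · exact (hxT (glueRight_eq_glueLeft m ((gluePOf_eq_some m).1 hx)).1).elim

theorem glue_evord_glueRight {y y' : B.carrier} :
    (glue A B m).evord (glueRight m y) (glueRight m y') ↔ B.evord y y' := by
  refine ⟨?_, fun h => Or.inr ⟨y, y', glueQOf_glueRight m y, glueQOf_glueRight m y', h⟩⟩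
  rintro (⟨x, x', hx, hx', h⟩ | ⟨z, z', hz, hz', h⟩)
  · obtain ⟨hxT, rfl⟩ := glueRight_eq_glueLeft m ((gluePOf_eq_some m).1 hx)
    obtain ⟨hxT', rfl⟩ := glueRight_eq_glueLeft m ((gluePOf_eq_some m).1 hx')
    exact (m.evord_iff _ _).1 h
  · rw [glueQOf_glueRight] at hz hz'
    cases hz; cases hz'; exact h

theorem glueRight_mem_glue_T {y : B.carrier} : glueRight m y ∈ (glue A B m).T ↔ y ∈ B.T :=
  ⟨fun ⟨z, hz, h⟩ => by rw [glueQOf_glueRight] at hz; cases hz; exact h,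
    fun h => ⟨y, glueQOf_glueRight m y, h⟩⟩

theorem glue_lab_glueRight (y : B.carrier) : (glue A B m).lab (glueRight m y) = B.lab y := by
  by_cases hy : y ∈ B.S
  · rw [glueRight, dif_pos hy]
    exact (m.lab_eq (m.g.symm ⟨y, hy⟩)).symm.trans (by simp)
  · rw [glueRight, dif_neg hy]
    rfl

end Glue

/-- `K₁` and `K₂` are the events of the two factors of a gluing `P = P₁ * P₂`,
their intersection being the common interface `T_{P₁} ≅ S_{P₂}`. -/
structure IsCut (P : PreIpomset σ) (K₁ K₂ : Set P.carrier) : Prop where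
  S_subset : P.S ⊆ K₁
  T_subset : P.T ⊆ K₂
  union_eq : K₁ ∪ K₂ = univ
  lt_of_mem : ∀ x ∈ K₁ \ K₂, ∀ y ∈ K₂ \ K₁, P.lt x y

theorem IsCut.mem_or {P : PreIpomset σ} {K₁ K₂ : Set P.carrier} (h : IsCut P K₁ K₂)
    (x : P.carrier) : x ∈ K₁ ∨ x ∈ K₂ :=
  h.union_eq.ge (mem_univ x)

theorem IsCut.mem_of_lt {P : PreIpomset σ} (hP : P.IsIpomset) {K₁ K₂ : Set P.carrier}
    (h : IsCut P K₁ K₂) {x y : P.carrier} (hxy : P.lt x y) :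
    (x ∈ K₁ ∧ y ∈ K₁) ∨ (x ∈ K₂ ∧ y ∈ K₂) ∨ (x ∈ K₁ \ K₂ ∧ y ∈ K₂ \ K₁) := by
  have hyx : y ∈ K₁ \ K₂ → x ∉ K₂ \ K₁ := fun hy hx =>
    hP.lt_irrefl x (hP.lt_trans _ _ _ hxy (h.lt_of_mem y hy x hx))
  have := h.mem_or x
  have := h.mem_or y
  simp only [mem_sdiff] at hyx ⊢
  tauto

theorem IsCut.mem_of_evord {P : PreIpomset σ} (hP : P.IsIpomset) {K₁ K₂ : Set P.carrier}
    (h : IsCut P K₁ K₂) {x y : P.carrier} (hxy : P.evord x y) :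
    (x ∈ K₁ ∧ y ∈ K₁) ∨ (x ∈ K₂ ∧ y ∈ K₂) := by
  have hxy' : x ∈ K₁ \ K₂ → y ∉ K₂ \ K₁ := fun hx hy =>
    (hP.lt_not_evord _ _ (h.lt_of_mem x hx y hy)).1 hxy
  have hyx : y ∈ K₁ \ K₂ → x ∉ K₂ \ K₁ := fun hy hx =>
    (hP.lt_not_evord _ _ (h.lt_of_mem y hy x hx)).2 hxy
  have := h.mem_or x
  have := h.mem_or y
  simp only [mem_sdiff] at hxy' hyx
  tauto

theorem IsCut.image {P Q : PreIpomset σ} {K₁ K₂ : Set P.carrier} (h : IsCut P K₁ K₂)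
    (f : P.carrier ≃ Q.carrier) (hlt : ∀ x y, P.lt x y ↔ Q.lt (f x) (f y))
    (hS : ∀ x, x ∈ P.S ↔ f x ∈ Q.S) (hT : ∀ x, x ∈ P.T ↔ f x ∈ Q.T) :
    IsCut Q (f '' K₁) (f '' K₂) where
  S_subset x hx := ⟨f.symm x, h.S_subset ((hS _).2 (by simpa)), by simp⟩
  T_subset x hx := ⟨f.symm x, h.T_subset ((hT _).2 (by simpa)), by simp⟩
  union_eq := by rw [← image_union, h.union_eq, image_univ_of_surjective f.surjective]
  lt_of_mem := by
    rintro _ ⟨⟨x, hx, rfl⟩, hx'⟩ _ ⟨⟨y, hy, rfl⟩, hy'⟩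
    rw [f.injective.mem_set_image] at hx' hy'
    exact (hlt x y).1 (h.lt_of_mem x ⟨hx, hx'⟩ y ⟨hy, hy'⟩)

theorem isCut_glue {A B : PreIpomset σ} (m : Matching A B) :
    IsCut (glue A B m) (range (glueLeft m)) (range (glueRight m)) where
  S_subset := fun _ ⟨a, ha, _⟩ => ⟨a, ((gluePOf_eq_some m).1 ha).symm⟩
  T_subset := fun _ ⟨y, hy, _⟩ => ⟨y, (eq_glueRight_of_glueQOf m hy).symm⟩
  union_eq := by
    refine eq_univ_of_forall ?_
    rintro (a | z)
    · exact Or.inl ⟨a, rfl⟩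
    · exact Or.inr ⟨z.val, (eq_glueRight_of_glueQOf m rfl).symm⟩
  lt_of_mem := by
    rintro _ ⟨⟨a, rfl⟩, ha⟩ _ ⟨⟨y, rfl⟩, hy⟩
    rw [glueLeft_mem_range_glueRight] at ha
    rw [glueRight_mem_range_glueLeft] at hy
    exact Or.inr (Or.inr ⟨⟨a, rfl, ha⟩, y, glueQOf_glueRight m y, hy⟩)

theorem GlueRel.exists_isCut {A B P : PreIpomset σ} (h : GlueRel A B P) :
    ∃ K₁ K₂, IsCut P K₁ K₂ ∧ (B.IsIpomset → Iso A (P.induce K₁ P.S K₂)) ∧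
      (A.IsIpomset → Iso B (P.induce K₂ K₁ P.T)) := by
  obtain ⟨m, f, hlt, hev, hS, hT, hlab⟩ := h
  have hL : range (f ∘ glueLeft m) = f '' range (glueLeft m) := range_comp f _
  have hR : range (f ∘ glueRight m) = f '' range (glueRight m) := range_comp f _
  refine ⟨range (f ∘ glueLeft m), range (f ∘ glueRight m),
    hL ▸ hR ▸ (isCut_glue m).image f hlt hS hT, fun hB => ?_, fun hA => ?_⟩
  · refine iso_induce_range (f.injective.comp (glueLeft_injective m))
      (fun a b => ?_) (fun a b => ?_) (fun a => ?_) (fun a => ?_) (fun a => hlab _)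
    · rw [comp_apply, comp_apply, ← hlt, glue_lt_glueLeft m hB]
    · rw [comp_apply, comp_apply, ← hev, glue_evord_glueLeft]
    · rw [comp_apply, ← hS, glueLeft_mem_glue_S]
    · rw [comp_apply, hR, f.injective.mem_set_image, glueLeft_mem_range_glueRight]
  · refine iso_induce_range (f.injective.comp (glueRight_injective m))
      (fun y y' => ?_) (fun y y' => ?_) (fun y => ?_) (fun y => ?_) (fun y => ?_)
    · rw [comp_apply, comp_apply, ← hlt, glue_lt_glueRight m hA]
    · rw [comp_apply, comp_apply, ← hev, glue_evord_glueRight]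
    · rw [comp_apply, hL, f.injective.mem_set_image, glueRight_mem_range_glueLeft]
    · rw [comp_apply, ← hT, glueRight_mem_glue_T]
    · rw [comp_apply, hlab, glue_lab_glueRight]

def cutMatching (P : PreIpomset σ) (K₁ K₂ : Set P.carrier) :
    Matching (P.induce K₁ P.S K₂) (P.induce K₂ K₁ P.T) where
  g :=
    { toFun := fun a => ⟨⟨a.val.val, a.prop⟩, a.val.prop⟩
      invFun := fun y => ⟨⟨y.val.val, y.prop⟩, y.val.prop⟩
      left_inv := fun _ => rfl
      right_inv := fun _ => rfl }
  evord_iff _ _ := Iff.rfl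
  lab_eq _ := rfl

section CutGlue

variable {P : PreIpomset σ} {K₁ K₂ : Set P.carrier}

def cutGlueMap (P : PreIpomset σ) (K₁ K₂ : Set P.carrier) :
    (glue _ _ (cutMatching P K₁ K₂)).carrier → P.carrier :=
  Sum.elim Subtype.val fun y => y.val.val

theorem gluePOf_cut_eq_some {u : (glue _ _ (cutMatching P K₁ K₂)).carrier} {x : K₁} :
    gluePOf _ _ u = some x ↔ cutGlueMap P K₁ K₂ u = x.val := by
  rcases u with a | z
  · exact Option.some_inj.trans Subtype.ext_iff
  · exact iff_of_false (fun h => by cases h) fun h =>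
      z.2 (show z.val.val ∈ K₁ from (show z.val.val = x.val from h) ▸ x.2)

theorem glueQOf_cut_eq_some {u : (glue _ _ (cutMatching P K₁ K₂)).carrier} {y : K₂} :
    glueQOf _ _ (cutMatching P K₁ K₂) u = some y ↔ cutGlueMap P K₁ K₂ u = y.val := by
  rcases u with a | z
  · refine (glueQOf_glueLeft_eq_some (cutMatching P K₁ K₂) (a := a)).trans
      ⟨fun ⟨_, h⟩ => congrArg Subtype.val h, fun h => ?_⟩
    have ha : a.val ∈ K₂ := (show a.val = y.val from h) ▸ y.2
    exact ⟨ha, Subtype.ext h⟩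
  · exact Option.some_inj.trans Subtype.ext_iff

theorem cutGlueMap_bijective (h : K₁ ∪ K₂ = univ) : Bijective (cutGlueMap P K₁ K₂) := by
  refine ⟨?_, fun x => ?_⟩
  · rintro (a | z) (b | z') hab
    · exact congrArg Sum.inl (Subtype.ext hab)
    · exact (z'.2 (show z'.val.val ∈ K₁ from (show a.val = z'.val.val from hab) ▸ a.2)).elim
    · exact (z.2 (show z.val.val ∈ K₁ from (show b.val = z.val.val from hab.symm) ▸ b.2)).elim
    · exact congrArg Sum.inr (Subtype.ext (Subtype.ext hab))
  · by_cases hx : x ∈ K₁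
    · exact ⟨Sum.inl ⟨x, hx⟩, rfl⟩
    · have hx₂ : x ∈ K₂ := (h ▸ mem_univ x : x ∈ K₁ ∪ K₂).resolve_left hx
      exact ⟨Sum.inr ⟨⟨x, hx₂⟩, hx⟩, rfl⟩

theorem IsCut.glueRel (hP : P.IsIpomset) (h : IsCut P K₁ K₂) :
    GlueRel (P.induce K₁ P.S K₂) (P.induce K₂ K₁ P.T) P := by
  refine ⟨cutMatching P K₁ K₂, Equiv.ofBijective _ (cutGlueMap_bijective h.union_eq),
    fun u v => ⟨?_, fun hlt => ?_⟩, fun u v => ⟨?_, fun hev => ?_⟩, fun u => ⟨?_, fun hu => ?_⟩,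
    fun u => ⟨?_, fun hu => ?_⟩, by rintro (a | z) <;> rfl⟩
  · rintro (⟨x, x', hx, hx', hlt⟩ | ⟨y, y', hy, hy', hlt⟩ | ⟨⟨x, hx, hxT⟩, y, hy, hyS⟩)
    · rwa [Equiv.ofBijective_apply, Equiv.ofBijective_apply, gluePOf_cut_eq_some.1 hx,
        gluePOf_cut_eq_some.1 hx']
    · rwa [Equiv.ofBijective_apply, Equiv.ofBijective_apply, glueQOf_cut_eq_some.1 hy,
        glueQOf_cut_eq_some.1 hy']
    · rw [Equiv.ofBijective_apply, Equiv.ofBijective_apply, gluePOf_cut_eq_some.1 hx,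
        glueQOf_cut_eq_some.1 hy]
      exact h.lt_of_mem _ ⟨x.2, hxT⟩ _ ⟨y.2, hyS⟩
  · rcases h.mem_of_lt hP hlt with ⟨hu, hv⟩ | ⟨hu, hv⟩ | ⟨hu, hv⟩
    · exact Or.inl ⟨⟨_, hu⟩, ⟨_, hv⟩, gluePOf_cut_eq_some.2 rfl, gluePOf_cut_eq_some.2 rfl, hlt⟩
    · exact Or.inr (Or.inl ⟨⟨_, hu⟩, ⟨_, hv⟩, glueQOf_cut_eq_some.2 rfl,
        glueQOf_cut_eq_some.2 rfl, hlt⟩)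
    · exact Or.inr (Or.inr ⟨⟨⟨_, hu.1⟩, gluePOf_cut_eq_some.2 rfl, hu.2⟩,
        ⟨_, hv.1⟩, glueQOf_cut_eq_some.2 rfl, hv.2⟩)
  · rintro (⟨x, x', hx, hx', hev⟩ | ⟨y, y', hy, hy', hev⟩)
    · rwa [Equiv.ofBijective_apply, Equiv.ofBijective_apply, gluePOf_cut_eq_some.1 hx,
        gluePOf_cut_eq_some.1 hx']
    · rwa [Equiv.ofBijective_apply, Equiv.ofBijective_apply, glueQOf_cut_eq_some.1 hy,
        glueQOf_cut_eq_some.1 hy']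
  · rcases h.mem_of_evord hP hev with ⟨hu, hv⟩ | ⟨hu, hv⟩
    · exact Or.inl ⟨⟨_, hu⟩, ⟨_, hv⟩, gluePOf_cut_eq_some.2 rfl, gluePOf_cut_eq_some.2 rfl, hev⟩
    · exact Or.inr ⟨⟨_, hu⟩, ⟨_, hv⟩, glueQOf_cut_eq_some.2 rfl, glueQOf_cut_eq_some.2 rfl, hev⟩
  · rintro ⟨x, hx, hxS⟩
    rwa [Equiv.ofBijective_apply, gluePOf_cut_eq_some.1 hx]
  · exact ⟨⟨_, h.S_subset hu⟩, gluePOf_cut_eq_some.2 rfl, hu⟩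
  · rintro ⟨y, hy, hyT⟩
    rwa [Equiv.ofBijective_apply, glueQOf_cut_eq_some.1 hy]
  · exact ⟨⟨_, h.T_subset hu⟩, glueQOf_cut_eq_some.2 rfl, hu⟩

end CutGlue

/-! ### Sparse step decompositions -/

section Antichain

variable {P : PreIpomset σ} {K S' T' : Set P.carrier}

theorem induce_isIpomset_of_antichain (hP : P.IsIpomset)
    (hK : ∀ x ∈ K, ∀ y ∈ K, ¬ P.lt x y) : (P.induce K S' T').IsIpomset :=
  induce_isIpomset hP (fun x hx y hy => hK y hy x hx.1) (fun x hx y hy => hK x hx.1 y hy)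

theorem isStarter_induce (hP : P.IsIpomset) (hK : ∀ x ∈ K, ∀ y ∈ K, ¬ P.lt x y)
    (hT : K ⊆ T') : IsStarter (P.induce K S' T') :=
  ⟨induce_isIpomset_of_antichain hP hK, induce_discrete hK, eq_univ_of_forall fun x => hT x.2⟩

theorem isTerminator_induce (hP : P.IsIpomset) (hK : ∀ x ∈ K, ∀ y ∈ K, ¬ P.lt x y)
    (hS : K ⊆ S') : IsTerminator (P.induce K S' T') :=
  ⟨induce_isIpomset_of_antichain hP hK, induce_discrete hK, eq_univ_of_forall fun x => hS x.2⟩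

end Antichain

def initialStartable (P : PreIpomset σ) : Set P.carrier :=
  {x | x ∉ P.S ∧ ∀ w, ¬ P.lt w x}

def initialTerminable (P : PreIpomset σ) : Set P.carrier :=
  {x | x ∈ P.S ∧ x ∉ P.T ∧ ∀ v, v ∉ P.S → P.lt x v}

def tgtAbove (P : PreIpomset σ) : Set P.carrier :=
  {x | x ∈ P.T ∧ ∀ w, w ∉ P.T → P.lt w x}

def finalStartable (P : PreIpomset σ) : Set P.carrier := tgtAbove P \ P.S

theorem Iso.tgtAbove_eq_empty {P Q : PreIpomset σ} (h : Iso P Q) (hP : tgtAbove P = ∅) :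
    tgtAbove Q = ∅ := by
  obtain ⟨f, hlt, -, -, hT, -⟩ := h
  refine eq_empty_of_forall_notMem fun x ⟨hxT, hx⟩ =>
    eq_empty_iff_forall_notMem.1 hP (f.symm x) ⟨?_, fun w hw => ?_⟩
  · simpa [hT] using hxT
  · simpa [hlt] using hx (f w) (by rwa [← hT])

theorem Iso.finalStartable_eq_empty {P Q : PreIpomset σ} (h : Iso P Q)
    (hP : finalStartable P = ∅) : finalStartable Q = ∅ := by
  obtain ⟨f, hlt, -, hS, hT, -⟩ := h
  refine eq_empty_of_forall_notMem fun x ⟨⟨hxT, hx⟩, hxS⟩ =>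
    eq_empty_iff_forall_notMem.1 hP (f.symm x) ⟨⟨?_, fun w hw => ?_⟩, ?_⟩
  · simpa [hT] using hxT
  · simpa [hlt] using hx (f w) (by rwa [← hT])
  · simpa [hS] using hxS

theorem IsProperStarter.finalStartable_nonempty {P : PreIpomset σ} (h : IsProperStarter P) :
    (finalStartable P).Nonempty := by
  obtain ⟨x, hx⟩ := (ne_univ_iff_exists_notMem _).1 h.2
  exact ⟨x, ⟨h.1.2.2 ▸ mem_univ x, fun w hw => (hw (h.1.2.2 ▸ mem_univ w)).elim⟩, hx⟩

theorem IsProperTerminator.initialTerminable_nonempty {P : PreIpomset σ}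
    (h : IsProperTerminator P) : (initialTerminable P).Nonempty := by
  obtain ⟨x, hx⟩ := (ne_univ_iff_exists_notMem _).1 h.2
  exact ⟨x, h.1.2.2 ▸ mem_univ x, hx, fun v hv => (hv (h.1.2.2 ▸ mem_univ v)).elim⟩

theorem IsProperTerminator.tgtAbove_eq_empty {P : PreIpomset σ} (h : IsProperTerminator P) :
    tgtAbove P = ∅ := by
  obtain ⟨w, hw⟩ := (ne_univ_iff_exists_notMem _).1 h.2
  exact eq_empty_of_forall_notMem fun x ⟨_, hx⟩ => h.1.2.1 w x (hx w hw)

theorem initialTerminable_eq_empty_of_T_eq_univ {P : PreIpomset σ} (h : P.T = univ) :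
    initialTerminable P = ∅ :=
  eq_empty_of_forall_notMem fun x hx => hx.2.1 (h ▸ mem_univ x)

theorem IsIpomset.exists_minimal_lt {P : PreIpomset σ} (hP : P.IsIpomset) {w v : P.carrier}
    (h : P.lt w v) : ∃ u, P.lt u v ∧ ∀ w, ¬ P.lt w u := by
  have : IsTrans P.carrier P.lt := ⟨hP.lt_trans⟩
  have : Std.Irrefl P.lt := ⟨hP.lt_irrefl⟩
  obtain ⟨u, hu, hmin⟩ := (Finite.wellFounded_of_trans_of_irrefl P.lt).has_min {w | P.lt w v} ⟨w, h⟩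
  exact ⟨u, hu, fun w hw => hmin w (hP.lt_trans _ _ _ hw hu) hw⟩

theorem IsIpomset.upper_subset_total {P : PreIpomset σ} (hP : P.IsIpomset) (a b : P.carrier) :
    {v | P.lt a v} ⊆ {v | P.lt b v} ∨ {v | P.lt b v} ⊆ {v | P.lt a v} := by
  by_contra! h
  obtain ⟨⟨v, hav, hbv⟩, ⟨v', hbv', hav'⟩⟩ := And.imp not_subset.1 not_subset.1 h
  exact (hP.interval a v b v' hav hbv').elim hav' hbv

/-- When all minimal events are sources, a source event that is not a target and whose strict
upper set is largest (inclusion of upper sets being total in an interval order) can be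
terminated first. -/
theorem initialTerminable_nonempty {P : PreIpomset σ} (hP : P.IsIpomset)
    (hA : initialStartable P = ∅) (hT : P.T ≠ univ) : (initialTerminable P).Nonempty := by
  have hbelow : ∀ v ∉ P.S, ∃ u ∈ P.S \ P.T, P.lt u v := by
    intro v hv
    obtain ⟨w, hw⟩ : ∃ w, P.lt w v := by
      by_contra! hmin
      exact eq_empty_iff_forall_notMem.1 hA v ⟨hv, hmin⟩
    obtain ⟨u, huv, hu⟩ := hP.exists_minimal_lt hw
    have huS : u ∈ P.S := by
      by_contra huS
      exact eq_empty_iff_forall_notMem.1 hA u ⟨huS, hu⟩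
    exact ⟨u, ⟨huS, fun huT => hP.tgt_max u huT v huv⟩, huv⟩
  have hne : (P.S \ P.T).Nonempty := by
    obtain ⟨v, hv⟩ := (ne_univ_iff_exists_notMem _).1 hT
    by_cases hvS : v ∈ P.S
    · exact ⟨v, hvS, hv⟩
    · obtain ⟨u, hu, -⟩ := hbelow v hvS
      exact ⟨u, hu⟩
  obtain ⟨x, hx, hmax⟩ := (P.S \ P.T).toFinite.exists_maximalFor (fun x => {v | P.lt x v}) _ hne
  refine ⟨x, hx.1, hx.2, fun v hv => ?_⟩
  obtain ⟨u, hu, huv⟩ := hbelow v hv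
  rcases hP.upper_subset_total u x with hux | hxu
  · exact hux huv
  · exact hmax hu hxu huv

-- The number of events started plus the number of events terminated in `P`.
noncomputable def numSteps (P : PreIpomset σ) : ℕ := P.Sᶜ.ncard + P.Tᶜ.ncard

theorem ncard_compl_val_preimage {α : Type} {K S' : Set α} :
    {x : K | x.val ∈ S'}ᶜ.ncard = (K \ S').ncard := by
  rw [← ncard_image_of_injective _ Subtype.val_injective]
  congr 1
  ext x
  simp only [mem_image, mem_compl_iff, mem_ofPred_eq, Subtype.exists, exists_and_right,
    exists_eq_right, mem_sdiff]
  tauto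

theorem numSteps_induce (P : PreIpomset σ) (K S' T' : Set P.carrier) :
    numSteps (P.induce K S' T') = (K \ S').ncard + (K \ T').ncard :=
  congrArg₂ (· + ·) ncard_compl_val_preimage ncard_compl_val_preimage

theorem isCut_initialTerminable (P : PreIpomset σ) :
    IsCut P P.S (initialTerminable P)ᶜ where
  S_subset := subset_rfl
  T_subset _ hx hB := hB.2.1 hx
  union_eq := eq_univ_of_forall fun x => (em (x ∈ initialTerminable P)).imp (·.1) id
  lt_of_mem _ hx y hy := (not_not.1 hx.2).2.2 y hy.2

theorem isCut_initialStartable (P : PreIpomset σ) :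
    IsCut P (P.S ∪ initialStartable P) univ where
  S_subset := subset_union_left
  T_subset := subset_univ _
  union_eq := union_univ _
  lt_of_mem _ hx := (hx.2 trivial).elim

-- The conditions on the first step are what keeps the decomposition alternating when a
-- further step is glued on the left.
def HasAdaptedSparseDecomp (P : PreIpomset σ) : Prop :=
  ∃ l, IsSparseDecomp l P ∧
    (∀ Q, l.getLast? = some Q → IsProperStarter Q → (finalStartable P).Nonempty) ∧
    (∀ H, l.head? = some H → IsProperTerminator H → (initialTerminable P).Nonempty) ∧
    (∀ H, l.head? = some H → IsProperStarter H → initialTerminable P = ∅)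

theorem GluesTo.ne_nil {l : List (PreIpomset σ)} {R : PreIpomset σ} (h : GluesTo l R) :
    l ≠ [] := by
  cases h <;> simp

theorem IsSparseDecomp.cons {l : List (PreIpomset σ)} {L R P : PreIpomset σ}
    (hd : IsSparseDecomp l R) (hR : ¬ (R.S = univ ∧ R.T = univ)) (hg : GlueRel L R P)
    (hL : (IsProperStarter L ∧ ∀ H, l.head? = some H → ¬ IsProperStarter H) ∨
      (IsProperTerminator L ∧ ∀ H, l.head? = some H → ¬ IsProperTerminator H)) :
    IsSparseDecomp (L :: l) P := by
  obtain ⟨hl, ⟨I, rfl, hI⟩ | ⟨hprop, halt⟩⟩ := hd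
  · cases hl with
    | single hiso => exact (hR ⟨hiso.S_eq_univ hI.2.2.1, hiso.T_eq_univ hI.2.2.2⟩).elim
    | cons hl' _ => cases hl'
  obtain ⟨H, t, rfl⟩ := List.exists_cons_of_ne_nil hl.ne_nil
  have hH := hprop H List.mem_cons_self
  refine ⟨hl.cons hg, Or.inr ⟨List.forall_mem_cons.2 ⟨hL.imp (·.1) (·.1), hprop⟩,
    List.isChain_cons_cons.2 ⟨?_, halt⟩⟩⟩
  rcases hL with ⟨hL, hne⟩ | ⟨hL, hne⟩
  · exact Or.inl ⟨hL, hH.resolve_left (hne H rfl)⟩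
  · exact Or.inr ⟨hL, hH.resolve_right (hne H rfl)⟩

theorem hasAdaptedSparseDecomp_of_S_or_T_eq_univ {P : PreIpomset σ} (hP : P.IsIpomset)
    (h : P.S = univ ∨ P.T = univ) : HasAdaptedSparseDecomp P := by
  have hD : P.Discrete := fun x y hxy => h.elim (fun hS => hP.src_min y (hS ▸ mem_univ y) x hxy)
    (fun hT => hP.tgt_max x (hT ▸ mem_univ x) y hxy)
  refine ⟨[P], ⟨GluesTo.single (iso_refl P), ?_⟩, fun Q hQ hQs => ?_, fun Q hQ hQt => ?_,
    fun Q hQ hQs => ?_⟩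
  · by_cases hS : P.S = univ <;> by_cases hT : P.T = univ
    · exact Or.inl ⟨P, rfl, hP, hD, hS, hT⟩
    · exact Or.inr ⟨by simpa using Or.inr ⟨⟨hP, hD, hS⟩, hT⟩, List.isChain_singleton _⟩
    · exact Or.inr ⟨by simpa using Or.inl ⟨⟨hP, hD, hT⟩, hS⟩, List.isChain_singleton _⟩
    · exact (h.elim hS hT).elim
  · cases hQ
    exact hQs.finalStartable_nonempty
  · cases hQ
    exact hQt.initialTerminable_nonempty
  · cases hQ
    exact initialTerminable_eq_empty_of_T_eq_univ hQs.1.2.2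

theorem HasAdaptedSparseDecomp.of_initialTerminable_nonempty {P : PreIpomset σ}
    (hP : P.IsIpomset) (hS : P.S ≠ univ) (hB : (initialTerminable P).Nonempty)
    (ih : ∀ Q : PreIpomset σ, numSteps Q < numSteps P → Q.IsIpomset → HasAdaptedSparseDecomp Q) :
    HasAdaptedSparseDecomp P := by
  obtain ⟨b, hb⟩ := hB
  set R := P.induce (initialTerminable P)ᶜ P.S P.T
  have hL : IsProperTerminator (P.induce P.S P.S (initialTerminable P)ᶜ) :=
    ⟨isTerminator_induce hP (fun x _ y hy => hP.src_min y hy x) subset_rfl,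
      (ne_univ_iff_exists_notMem _).2 ⟨⟨b, hb.1⟩, fun h => h hb⟩⟩
  have hRS : R.S ≠ univ := by
    obtain ⟨v, hv⟩ := (ne_univ_iff_exists_notMem _).1 hS
    exact (ne_univ_iff_exists_notMem _).2 ⟨⟨v, fun h => hv h.1⟩, hv⟩
  have hRB : initialTerminable R = ∅ := eq_empty_of_forall_notMem fun x ⟨hxS, hxT, hx⟩ =>
    x.2 ⟨hxS, hxT, fun v hv => hx ⟨v, fun h => hv h.1⟩ hv⟩
  have hRn : numSteps R < numSteps P := by
    have h₁ : ((initialTerminable P)ᶜ \ P.S).ncard ≤ P.Sᶜ.ncard := ncard_le_ncard fun x hx => hx.2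
    have h₂ : ((initialTerminable P)ᶜ \ P.T).ncard < P.Tᶜ.ncard :=
      ncard_lt_ncard ⟨fun x hx => hx.2, fun h => (h hb.2.1).1 hb⟩
    rw [numSteps_induce, numSteps]
    omega
  obtain ⟨l, hd, hlast, hheadT, -⟩ :=
    ih R hRn (induce_isIpomset hP (fun x hx y _ => hP.src_min x hx.2 y)
      (fun x hx y _ => hP.tgt_max x hx.2 y))
  refine ⟨_ :: l, hd.cons (fun h => hRS h.1) ((isCut_initialTerminable P).glueRel hP)
      (Or.inr ⟨hL, fun H hH hHt => (hheadT H hH hHt).ne_empty hRB⟩),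
    fun Q hQ hQs => ?_, fun _ _ _ => ⟨b, hb⟩, fun H hH hHs => ?_⟩
  · obtain ⟨x, ⟨hxT, hx⟩, hxS⟩ :=
      hlast Q ((List.getLast?_cons_of_ne_nil hd.1.ne_nil).symm.trans hQ) hQs
    refine ⟨x.val, ⟨hxT, fun w hw => ?_⟩, hxS⟩
    by_cases hwB : w ∈ initialTerminable P
    · exact hwB.2.2 x.val hxS
    · exact hx ⟨w, hwB⟩ hw
  · cases hH
    exact (hL.2 hHs.1.2.2).elim

theorem HasAdaptedSparseDecomp.of_initialTerminable_eq_empty {P : PreIpomset σ}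
    (hP : P.IsIpomset) (hT : P.T ≠ univ) (hB : initialTerminable P = ∅)
    (ih : ∀ Q : PreIpomset σ, numSteps Q < numSteps P → Q.IsIpomset → HasAdaptedSparseDecomp Q) :
    HasAdaptedSparseDecomp P := by
  have hmin : ∀ x ∈ P.S ∪ initialStartable P, ∀ y, ¬ P.lt y x := by
    rintro x (hx | hx) y
    exacts [hP.src_min x hx y, hx.2 y]
  obtain ⟨a, ha⟩ : (initialStartable P).Nonempty := nonempty_iff_ne_empty.2 fun hA =>
    (initialTerminable_nonempty hP hA hT).ne_empty hB
  set R := P.induce univ (P.S ∪ initialStartable P) P.T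
  have hL : IsProperStarter (P.induce (P.S ∪ initialStartable P) P.S univ) :=
    ⟨isStarter_induce hP (fun x _ y hy => hmin y hy x) (subset_univ _),
      (ne_univ_iff_exists_notMem _).2 ⟨⟨a, Or.inr ha⟩, ha.1⟩⟩
  have hR : R.IsIpomset :=
    induce_isIpomset hP (fun x hx y _ => hmin x hx.2 y) (fun x hx y _ => hP.tgt_max x hx.2 y)
  have hRT : R.T ≠ univ := by
    obtain ⟨v, hv⟩ := (ne_univ_iff_exists_notMem _).1 hT
    exact (ne_univ_iff_exists_notMem _).2 ⟨⟨v, trivial⟩, hv⟩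
  have hRB : (initialTerminable R).Nonempty := by
    refine initialTerminable_nonempty hR (eq_empty_of_forall_notMem fun x ⟨hxS, hx⟩ => ?_) hRT
    exact hxS (Or.inr ⟨fun h => hxS (Or.inl h), fun w => hx ⟨w, trivial⟩⟩)
  have hRn : numSteps R < numSteps P := by
    have h₁ : (univ \ (P.S ∪ initialStartable P)).ncard < P.Sᶜ.ncard :=
      ncard_lt_ncard ⟨fun x hx h => hx.2 (Or.inl h), fun h => (h ha.1).2 (Or.inr ha)⟩
    have h₂ : (univ \ P.T).ncard ≤ P.Tᶜ.ncard := ncard_le_ncard fun x hx => hx.2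
    rw [numSteps_induce, numSteps]
    omega
  obtain ⟨l, hd, hlast, -, hheadS⟩ := ih R hRn hR
  refine ⟨_ :: l, hd.cons (fun h => hRT h.2) ((isCut_initialStartable P).glueRel hP)
      (Or.inl ⟨hL, fun H hH hHs => hRB.ne_empty (hheadS H hH hHs)⟩),
    fun Q hQ hQs => ?_, fun H hH hHt => ?_, fun _ _ _ => hB⟩
  · obtain ⟨x, ⟨hxT, hx⟩, hxS⟩ :=
      hlast Q ((List.getLast?_cons_of_ne_nil hd.1.ne_nil).symm.trans hQ) hQs
    exact ⟨x.val, ⟨hxT, fun w hw => hx ⟨w, trivial⟩ hw⟩, fun h => hxS (Or.inl h)⟩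
  · cases hH
    exact (hHt.2 hL.1.2.2).elim

theorem hasAdaptedSparseDecomp {P : PreIpomset σ} (hP : P.IsIpomset) :
    HasAdaptedSparseDecomp P := by
  induction hn : numSteps P using Nat.strong_induction_on generalizing P with
  | _ n ih =>
    have ih' : ∀ Q : PreIpomset σ, numSteps Q < numSteps P → Q.IsIpomset →
        HasAdaptedSparseDecomp Q := fun Q hQ hQ' => ih _ (hn ▸ hQ) hQ' rfl
    by_cases hST : P.S = univ ∨ P.T = univ
    · exact hasAdaptedSparseDecomp_of_S_or_T_eq_univ hP hST
    obtain ⟨hS, hT⟩ := not_or.1 hST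
    by_cases hB : (initialTerminable P).Nonempty
    · exact .of_initialTerminable_nonempty hP hS hB ih'
    · exact .of_initialTerminable_eq_empty hP hT (not_nonempty_iff_eq_empty.1 hB) ih'

theorem GlueRel.tgtAbove_eq_empty {A B P : PreIpomset σ} (hA : A.IsIpomset) (h : GlueRel A B P)
    (hB : tgtAbove B = ∅) : tgtAbove P = ∅ := by
  obtain ⟨K₁, K₂, hc, -, hiso⟩ := h.exists_isCut
  have hK := (hiso hA).tgtAbove_eq_empty hB
  exact eq_empty_of_forall_notMem fun x ⟨hxT, hx⟩ =>
    eq_empty_iff_forall_notMem.1 hK ⟨x, hc.T_subset hxT⟩ ⟨hxT, fun w hw => hx w.val hw⟩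

theorem GluesTo.tgtAbove_eq_empty {l : List (PreIpomset σ)} {R : PreIpomset σ}
    (hg : GluesTo l R) (hl : ∀ Q ∈ l, Q.IsIpomset)
    (hlast : ∀ Q, l.getLast? = some Q → tgtAbove Q = ∅) : tgtAbove R = ∅ := by
  induction hg with
  | single hiso => exact hiso.tgtAbove_eq_empty (hlast _ rfl)
  | @cons A l R' R _ hrel ih =>
    refine hrel.tgtAbove_eq_empty (hl A List.mem_cons_self) (ih (fun Q hQ => ?_) fun Q hQ => ?_)
    exacts [hl Q (List.mem_cons_of_mem _ hQ), hlast Q (List.mem_getLast?_cons hQ)]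

theorem InQ.finalStartable_eq_empty {R : PreIpomset σ} (h : InQ R) : finalStartable R = ∅ := by
  obtain ⟨l, ⟨hg, ⟨I, rfl, hI⟩ | ⟨hprop, -⟩⟩, hlast⟩ := h
  · cases hg with
    | single hiso =>
      exact eq_empty_of_forall_notMem fun x hx => hx.2 (hiso.S_eq_univ hI.2.2.1 ▸ mem_univ x)
    | cons hg' _ => cases hg'
  · refine eq_empty_of_forall_notMem fun x hx => ?_
    refine eq_empty_iff_forall_notMem.1
      (hg.tgtAbove_eq_empty (fun Q hQ => ?_) fun Q hQ => ?_) x hx.1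
    · rcases hprop Q hQ with hQ | hQ
      exacts [hQ.1.1, hQ.1.1]
    · exact ((hprop Q (List.mem_of_getLast? hQ)).resolve_left (hlast Q hQ)).tgtAbove_eq_empty

/-! ### The presentation -/

theorem isCut_finalStartable (P : PreIpomset σ) : IsCut P (finalStartable P)ᶜ P.T where
  S_subset _ hx hA := hA.2 hx
  T_subset := subset_rfl
  union_eq := eq_univ_of_forall fun x => (em (x ∈ finalStartable P)).symm.imp id (·.1.1)
  lt_of_mem x hx _ hy := (not_not.1 hy.2).1.2 x hx.2

def withoutFinalStarts (P : PreIpomset σ) : PreIpomset σ := P.induce (finalStartable P)ᶜ P.S P.T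

def finalStarter (P : PreIpomset σ) : PreIpomset σ := P.induce P.T (finalStartable P)ᶜ P.T

theorem withoutFinalStarts_isIpomset {P : PreIpomset σ} (hP : P.IsIpomset) :
    (withoutFinalStarts P).IsIpomset :=
  induce_isIpomset hP (fun x hx y _ => hP.src_min x hx.2 y) (fun x hx y _ => hP.tgt_max x hx.2 y)

theorem finalStartable_withoutFinalStarts (P : PreIpomset σ) :
    finalStartable (withoutFinalStarts P) = ∅ := by
  refine eq_empty_of_forall_notMem fun x ⟨⟨hxT, hx⟩, hxS⟩ => x.2 ⟨⟨hxT, fun w hw => ?_⟩, hxS⟩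
  by_cases hwA : w ∈ finalStartable P
  · exact (hw hwA.1.1).elim
  · exact hx ⟨w, hwA⟩ hw

theorem withoutFinalStarts_inQ {P : PreIpomset σ} (hP : P.IsIpomset) :
    InQ (withoutFinalStarts P) := by
  obtain ⟨l, hd, hlast, -, -⟩ := hasAdaptedSparseDecomp (withoutFinalStarts_isIpomset hP)
  exact ⟨l, hd, fun Q hQ hQs =>
    (hlast Q hQ hQs).ne_empty (finalStartable_withoutFinalStarts P)⟩

theorem finalStarter_isStarter {P : PreIpomset σ} (hP : P.IsIpomset) : IsStarter (finalStarter P) :=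
  isStarter_induce hP (fun x hx y _ => hP.tgt_max x hx y) subset_rfl

theorem tgtIface_iso_finalStarter (P : PreIpomset σ) : Iso P.tgtIface (finalStarter P).conclistOf :=
  ⟨Equiv.refl _, fun _ _ => Iff.rfl, fun _ _ => Iff.rfl, fun _ => Iff.rfl, fun _ => Iff.rfl,
    fun _ => rfl⟩

-- `B` being a starter, the cut has `T_P` as right part; `finalStartable A = ∅` then says that
-- the events started by `B` are exactly `finalStartable P`.
theorem GlueRel.iso_withoutFinalStarts {A B P : PreIpomset σ} (hA : A.IsIpomset)
    (hA' : finalStartable A = ∅) (hB : IsStarter B) (h : GlueRel A B P) :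
    Iso A (withoutFinalStarts P) ∧ Iso B (finalStarter P) := by
  obtain ⟨K₁, K₂, hc, hisoA, hisoB⟩ := h.exists_isCut
  have hA₁ := hisoA hB.1
  have hB₂ := hisoB hA
  obtain rfl : K₂ = P.T := subset_antisymm
    (fun x hx => (hB₂.T_eq_univ hB.2.2).ge (mem_univ (⟨x, hx⟩ : K₂))) hc.T_subset
  obtain rfl : K₁ = (finalStartable P)ᶜ := by
    ext x
    refine ⟨fun hx hxA => ?_, fun hx => by_contra fun hx₁ => hx ?_⟩
    · exact eq_empty_iff_forall_notMem.1 (hA₁.finalStartable_eq_empty hA') ⟨x, hx⟩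
        ⟨⟨hxA.1.1, fun w hw => hxA.1.2 w.val hw⟩, hxA.2⟩
    · have hxT : x ∈ P.T := (hc.mem_or x).resolve_left hx₁
      exact ⟨⟨hxT, fun w hw => hc.lt_of_mem w ⟨(hc.mem_or w).resolve_right hw, hw⟩ x ⟨hxT, hx₁⟩⟩,
        fun hxS => hx₁ (hc.S_subset hxS)⟩
  exact ⟨hA₁, hB₂⟩

end PreIpomset

open PreIpomset

theorem unique_presentation_general {σ : Type} (P : PreIpomset σ)
    (hP : P.IsIpomset) :
    ∃ P' St : PreIpomset σ, P'.IsIpomset ∧ InQ P' ∧ IsStarter St ∧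
      Iso P.tgtIface St.conclistOf ∧ GlueRel P' St P ∧
      (∀ P'' St'' : PreIpomset σ, P''.IsIpomset → InQ P'' → IsStarter St'' →
        GlueRel P'' St'' P → Iso P'' P' ∧ Iso St'' St) :=
  ⟨withoutFinalStarts P, finalStarter P, withoutFinalStarts_isIpomset hP,
    withoutFinalStarts_inQ hP, finalStarter_isStarter hP, tgtIface_iso_finalStarter P,
    (isCut_finalStartable P).glueRel hP,
    fun _ _ hA hAq hB h => h.iso_withoutFinalStarts hA hAq.finalStartable_eq_empty hB⟩

/-- Every interval ipomset `P` has a unique (up to isomorphism)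
presentation `P = P' * ⟨V,U,U⟩` with `⟨V,U,U⟩` a starter on the target interface of
`P` and `P' ∈ iPoms^q`. -/
theorem unique_presentation {σ : Type} [Finite σ] (P : PreIpomset σ)
    (hP : P.IsIpomset) :
    ∃ P' St : PreIpomset σ, P'.IsIpomset ∧ InQ P' ∧ IsStarter St ∧
      Iso P.tgtIface St.conclistOf ∧ GlueRel P' St P ∧
      (∀ P'' St'' : PreIpomset σ, P''.IsIpomset → InQ P'' → IsStarter St'' →
        GlueRel P'' St'' P → Iso P'' P' ∧ Iso St'' St) :=
  unique_presentation_general P hP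

end HDA
end

section
/- For every partial HDA X there exists a partial HDA X' with L(X') = L(X) such that for every initial cell x of X' and every nonempty A ⊆ ev(x), the lower face δ⁰_A(x) is undefined. -/
open scoped Classical

/-!
Pair every cell with a budget `n : ℕ∞` bounding how many events its lower faces may unstart:
unstarting `A` spends `|A|`, terminating an event lifts the bound to `⊤`. Initial cells get
budget `0` and so lose their proper lower faces. Budgets spent along composable faces add up,
which keeps the lax precubical identity, and a path of `X` from `x` lifts to a path from
`(0, x)` by giving each cell on it the number of events started so far (`⊤` once one has
terminated).
-/

lemma Option.map₂_prodMk_eq_some_iff {α β : Type*} {a : Option α} {b : Option β}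
    {d : α × β} :
    Option.map₂ Prod.mk a b = some d ↔ a = some d.1 ∧ b = some d.2 := by
  cases a <;> cases b <;> simp [Prod.ext_iff]

namespace HDA

instance PreIpomset.finite_carrier {σ : Type} (P : PreIpomset σ) : Finite P.carrier := P.fin

section Budget

variable {α β : Type*}

/-- The budget of `δ_{A,B}(x)` when `x` has budget `n`; `none` when `|A| > n`. -/
noncomputable def budgetAfter (n : ℕ∞) (A B : Set α) : Option ℕ∞ :=
  if B = ∅ then if (A.ncard : ℕ∞) ≤ n then some (n - A.ncard) else none else some ⊤

lemma budgetAfter_empty_empty (n : ℕ∞) : budgetAfter n (∅ : Set α) ∅ = some n := by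
  simp [budgetAfter]

lemma budgetAfter_add_ncard (n : ℕ∞) (A : Set α) :
    budgetAfter (n + A.ncard) A ∅ = some n := by
  simp [budgetAfter, (ENat.addLECancellable_natCast _).add_tsub_cancel_right]

lemma budgetAfter_empty_left_isSome (n : ℕ∞) (B : Set α) :
    (budgetAfter n (∅ : Set α) B).isSome := by
  unfold budgetAfter; split_ifs <;> simp_all

lemma budgetAfter_zero_eq_none [Finite α] {A : Set α} (hA : A ≠ ∅) :
    budgetAfter 0 A ∅ = none := by
  simpa [budgetAfter, Set.ncard_eq_zero] using hA

lemma budgetAfter_union_image [Finite α] {g : β → α} (hg : Function.Injective g)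
    {A B : Set α} {C D : Set β} (hAC : Disjoint A (g '' C)) {n m k : ℕ∞}
    (h₁ : budgetAfter n A B = some m) (h₂ : budgetAfter m C D = some k) :
    budgetAfter n (A ∪ g '' C) (B ∪ g '' D) = some k := by
  have hcard : ((A ∪ g '' C).ncard : ℕ∞) = A.ncard + C.ncard := by
    rw [Set.ncard_union_eq hAC, Set.ncard_image_of_injective C hg, Nat.cast_add]
  unfold budgetAfter at *
  by_cases hB : B = ∅ <;> by_cases hD : D = ∅ <;>
    simp only [hB, hD, Set.union_empty_iff, Set.image_eq_empty, if_true, if_false, and_true,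
      and_false] at h₁ h₂ ⊢
  · split_ifs at h₁ h₂ with hA hC
    cases h₁; cases h₂
    rw [hcard, tsub_tsub, if_pos (add_le_of_le_tsub_left_of_le hA hC)]
  · split_ifs at h₁; cases h₁; exact h₂
  · cases h₁; rw [if_pos le_top, ENat.top_sub_natCast] at h₂; exact h₂
  · cases h₁; exact h₂

end Budget

lemma IsFaceEmbed.disjoint_image {σ : Type} {U V : PreIpomset σ} {K : Set U.carrier}
    {g : V.carrier → U.carrier} (hg : IsFaceEmbed U K V g) (C : Set V.carrier) :
    Disjoint K (g '' C) := by
  rw [Set.disjoint_right]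
  rintro _ ⟨v, -, rfl⟩
  simpa [hg.2.1] using Set.mem_range_self (f := g) v

namespace PrePHDA

variable {σ : Type} (X : PrePHDA σ)

noncomputable def budgetUnfold : PrePHDA σ where
  cell := ℕ∞ × X.cell
  ev c := X.ev c.2
  face c A B := Option.map₂ Prod.mk (budgetAfter c.1 A B) (X.face c.2 A B)
  start := {0} ×ˢ X.start
  accept := Set.univ ×ˢ X.accept

variable {X}

lemma budgetUnfold_face_eq_some {c d : X.budgetUnfold.cell}
    {A B : Set (X.budgetUnfold.ev c).carrier} :
    X.budgetUnfold.face c A B = some d ↔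
      budgetAfter c.1 A B = some d.1 ∧ X.face c.2 A B = some d.2 :=
  Option.map₂_prodMk_eq_some_iff

lemma IsLax.budgetUnfold (hX : X.IsLax) : X.budgetUnfold.IsLax := by
  intro c A B d h g hg C D e he
  rw [budgetUnfold_face_eq_some] at h he ⊢
  exact ⟨budgetAfter_union_image hg.1 (hg.disjoint_image C |>.mono_left Set.subset_union_left)
      h.1 he.1, hX c.2 A B d.2 h.2 g hg C D e.2 he.2⟩

lemma IsPHDA.budgetUnfold (hX : X.IsPHDA) : X.budgetUnfold.IsPHDA := by
  obtain ⟨hconc, hid, hembed, hlax⟩ := hX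
  refine ⟨fun c => hconc c.2, fun c => ?_, fun c A B d h => ?_, hlax.budgetUnfold⟩
  · exact budgetUnfold_face_eq_some.2 ⟨budgetAfter_empty_empty c.1, hid c.2⟩
  · exact hembed c.2 A B d.2 (budgetUnfold_face_eq_some.1 h).2

lemma budgetUnfold_face_start {x : X.cell} {A : Set (X.ev x).carrier} (hA : A ≠ ∅) :
    X.budgetUnfold.face (0, x) A ∅ = none := by
  change Option.map₂ Prod.mk (budgetAfter 0 A ∅) (X.face x A ∅) = none
  rw [budgetAfter_zero_eq_none hA, Option.map₂_none_left]

lemma exists_path_of_budgetUnfold {c d : X.budgetUnfold.cell} (β : X.budgetUnfold.Path c d)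
    {R : PreIpomset σ} (hR : Rec β R) : ∃ α : X.Path c.2 d.2, Rec α R := by
  induction β generalizing R with
  | nil c =>
    cases hR with
    | nil _ _ hIso => exact ⟨.nil _, .nil _ _ hIso⟩
  | up y A h rest ih =>
    cases hR with
    | up _ _ _ _ hrest hglue =>
      obtain ⟨α, hα⟩ := ih hrest
      exact ⟨.up y.2 A (budgetUnfold_face_eq_some.1 h).2 α, .up _ _ _ _ hα hglue⟩
  | down y B h rest ih =>
    cases hR with
    | down _ _ _ _ hrest hglue =>
      obtain ⟨α, hα⟩ := ih hrest
      exact ⟨.down y.2 B (budgetUnfold_face_eq_some.1 h).2 α, .down _ _ _ _ hα hglue⟩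

lemma exists_budgetUnfold_path {x z : X.cell} (α : X.Path x z) {R : PreIpomset σ}
    (hR : Rec α R) (n : ℕ∞) :
    ∃ m, ∃ β : X.budgetUnfold.Path (n, x) (m, z), Rec β R := by
  induction α generalizing n R with
  | nil x =>
    cases hR with
    | nil _ _ hIso => exact ⟨n, .nil _, .nil _ _ hIso⟩
  | up y A h rest ih =>
    cases hR with
    | up _ _ _ _ hrest hglue =>
      obtain ⟨m, β, hβ⟩ := ih hrest (n + A.ncard)
      have hface : X.budgetUnfold.face (n + A.ncard, y) A ∅ = some (n, _) :=
        budgetUnfold_face_eq_some.2 ⟨budgetAfter_add_ncard n A, h⟩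
      exact ⟨m, .up (n + A.ncard, y) A hface β, .up _ _ _ _ hβ hglue⟩
  | down y B h rest ih =>
    cases hR with
    | down _ _ _ _ hrest hglue =>
      obtain ⟨n', hn'⟩ := Option.isSome_iff_exists.1 (budgetAfter_empty_left_isSome n B)
      obtain ⟨m, β, hβ⟩ := ih hrest n'
      have hface : X.budgetUnfold.face (n, y) ∅ B = some (n', _) :=
        budgetUnfold_face_eq_some.2 ⟨hn', h⟩
      have hstep : Rec (Path.down (X := X.budgetUnfold) (n, y) B hface β) R :=
        .down _ _ _ _ hβ hglue
      exact ⟨m, _, hstep⟩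

lemma lang_budgetUnfold : X.budgetUnfold.lang = X.lang := by
  ext R
  constructor
  · rintro ⟨c, d, β, hc, hd, hβ⟩
    obtain ⟨α, hα⟩ := exists_path_of_budgetUnfold β hβ
    exact ⟨c.2, d.2, α, hc.2, hd.2, hα⟩
  · rintro ⟨x, z, α, hx, hz, hα⟩
    obtain ⟨m, β, hβ⟩ := exists_budgetUnfold_path α hα 0
    exact ⟨(0, x), (m, z), β, ⟨rfl, hx⟩, ⟨trivial, hz⟩, hβ⟩

end PrePHDA

theorem proper_start_cells_general {σ : Type} (X : PrePHDA σ) (hX : X.IsPHDA) :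
    ∃ X' : PrePHDA σ, X'.IsPHDA ∧
      (∀ x ∈ X'.start, ∀ A : Set (X'.ev x).carrier, A ≠ ∅ → X'.face x A ∅ = none) ∧
      X'.lang = X.lang := by
  refine ⟨X.budgetUnfold, hX.budgetUnfold, ?_, PrePHDA.lang_budgetUnfold⟩
  rintro ⟨n, x⟩ ⟨rfl, -⟩ A hA
  exact PrePHDA.budgetUnfold_face_start hA

/-- For every partial HDA `X` there is a language-equivalent partial
HDA `X'` in which no initial cell has a defined nonempty lower face. -/
theorem proper_start_cells {σ : Type} [Finite σ] (X : PrePHDA σ) (hX : X.IsPHDA) :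
    ∃ X' : PrePHDA σ, X'.IsPHDA ∧
      (∀ x ∈ X'.start, ∀ A : Set (X'.ev x).carrier, A ≠ ∅ → X'.face x A ∅ = none) ∧
      X'.lang = X.lang :=
  proper_start_cells_general X hX

end HDA
end
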